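/- arXiv:1711.04541 — 2 statements merged into one kernel-verified Lean document; each statement's English description precedes it below -/
import Mathlib

section
/- Let w₁ < w₂ and u₁ ≤ u₂, R = [u₁, u₂] × [w₁, w₂]. Let a, b : R → ℝ be continuous with a(u, w) > 0 and b(u, w) > 0 for all (u, w) ∈ R. Then there exist a real number γ and a continuously differentiable function U : [w₁, w₂] → ℝ with u₁ ≤ U(w) ≤ u₂ for all w ∈ [w₁, w₂], U(w₁) = u₁, U(w₂) = u₂, and U'(w) = γ · b(U(w), w) / a(U(w), w) for every w ∈ [w₁, w₂]. -/
open Set Filter Topology Metric MeasureTheory Function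
open scoped NNReal

/-!
Shooting in `γ`, followed by a Peano-type compactness argument. If the right-hand side `g` is
Lipschitz in `U` and `m ≤ g ≤ M` with `m > 0`, Picard–Lindelöf gives for every `γ` a solution of
`U' = γ g(·, U)`, `U w₁ = u₁`; by Grönwall its value at `w₂` depends continuously on `γ`, it equals
`u₁` for `γ = 0` and is at least `u₂` for `γ = (u₂ - u₁) / (m (w₂ - w₁))`, so the intermediate value
theorem yields the two-point solution. The merely continuous `f = b / a` is approximated uniformly
by such Lipschitz fields with the same bounds (Stone–Weierstrass). The resulting solutions are
equi-Lipschitz, so by Arzelà–Ascoli a subsequence converges together with its `γ`, and dominated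
convergence passes to the limit in `U t = u₁ + ∫ γ g(s, U s) ds`.
-/

theorem exists_lipschitzWith_abs_sub_lt {X : Type*} [MetricSpace X] [CompactSpace X]
    {f : X → ℝ} (hf : Continuous f) {ε : ℝ} (hε : 0 < ε) :
    ∃ (K : ℝ≥0) (g : X → ℝ), LipschitzWith K g ∧ ∀ x, |g x - f x| < ε := by
  let L : Set C(X, ℝ) := {g | ∃ K, LipschitzWith K g}
  have hsep : L.SeparatesPointsStrongly := by
    intro v x y
    -- for `x = y` the slope is `0 / 0 = 0`, and the constant function `v x` does the job
    let c := (v y - v x) / dist y x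
    have hlip : LipschitzWith (0 + ‖c‖₊ * 1) fun z => v x + c * dist z x :=
      (LipschitzWith.const (v x)).add ((lipschitzWith_smul c).comp (LipschitzWith.dist_left x))
    refine ⟨⟨_, hlip.continuous⟩, ⟨_, hlip⟩, by simp, ?_⟩
    rcases eq_or_ne x y with rfl | hxy
    · simp
    · simp [c, div_mul_cancel₀ _ (dist_ne_zero.2 hxy.symm)]
  have hL : closure L = univ :=
    ContinuousMap.sublattice_closure_eq_top L ⟨0, 0, LipschitzWith.const 0⟩
      (fun _ ⟨_, hg⟩ _ ⟨_, hh⟩ => ⟨_, hg.min hh⟩) (fun _ ⟨_, hg⟩ _ ⟨_, hh⟩ => ⟨_, hg.max hh⟩) hsep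
  obtain ⟨g, ⟨K, hK⟩, hfg⟩ := mem_closure_iff.1 (hL.symm ▸ mem_univ (⟨f, hf⟩ : C(X, ℝ))) ε hε
  refine ⟨K, g, hK, fun x => ?_⟩
  rw [← Real.dist_eq, dist_comm]
  exact (ContinuousMap.dist_apply_le_dist x).trans_lt hfg

theorem isCompact_setOf_lipschitzWith_forall_mem {X Y : Type*} [PseudoMetricSpace X] [MetricSpace Y]
    {s : Set Y} (hs : IsCompact s) (K : ℝ≥0) :
    IsCompact {g : C(X, Y) | LipschitzWith K g ∧ ∀ x, g x ∈ s} := by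
  apply ArzelaAscoli.isCompact_of_equicontinuous
  · have : ContinuousMap.toFun '' {g : C(X, Y) | LipschitzWith K g ∧ ∀ x, g x ∈ s} =
        {h | LipschitzWith K h} ∩ univ.pi fun _ => s := by
      ext h
      refine ⟨?_, fun hh => ⟨⟨h, hh.1.continuous⟩, ⟨hh.1, fun x => hh.2 x trivial⟩, rfl⟩⟩
      rintro ⟨g, hg, rfl⟩
      exact ⟨hg.1, fun x _ => hg.2 x⟩
    rw [this]
    exact (isCompact_univ_pi fun _ => hs).inter_left (isClosed_setOfPred_lipschitzWith K)
  · exact (LipschitzWith.uniformEquicontinuous _ K fun g => g.2.1).equicontinuous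

section DerivOnIcc

variable {f f' : ℝ → ℝ} {a b : ℝ}

theorem monotoneOn_Icc_of_hasDerivWithinAt_nonneg
    (hf : ∀ t ∈ Icc a b, HasDerivWithinAt f (f' t) (Icc a b) t) (hf' : ∀ t ∈ Icc a b, 0 ≤ f' t) :
    MonotoneOn f (Icc a b) :=
  monotoneOn_of_hasDerivWithinAt_nonneg (convex_Icc a b) (fun t ht => (hf t ht).continuousWithinAt)
    (fun t ht => (hf t (interior_subset ht)).mono interior_subset)
    fun t ht => hf' t (interior_subset ht)

theorem mapsTo_Icc_of_hasDerivWithinAt_nonneg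
    (hf : ∀ t ∈ Icc a b, HasDerivWithinAt f (f' t) (Icc a b) t) (hf' : ∀ t ∈ Icc a b, 0 ≤ f' t) :
    MapsTo f (Icc a b) (Icc (f a) (f b)) := fun _ ht =>
  have hmono := monotoneOn_Icc_of_hasDerivWithinAt_nonneg hf hf'
  ⟨hmono ⟨le_rfl, ht.1.trans ht.2⟩ ht ht.1, hmono ht ⟨ht.1.trans ht.2, le_rfl⟩ ht.2⟩

theorem mul_sub_le_image_sub_of_le_hasDerivWithinAt (hab : a ≤ b)
    (hf : ∀ t ∈ Icc a b, HasDerivWithinAt f (f' t) (Icc a b) t) {c : ℝ}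
    (hc : ∀ t ∈ Icc a b, c ≤ f' t) : c * (b - a) ≤ f b - f a := by
  have := monotoneOn_Icc_of_hasDerivWithinAt_nonneg (f := fun t => f t - c * t)
    (fun t ht => ((hf t ht).sub ((hasDerivWithinAt_id t _).const_mul c)))
    (fun t ht => by simpa using hc t ht) (left_mem_Icc.2 hab) (right_mem_Icc.2 hab) hab
  simp only at this
  linarith

theorem eq_add_integral_of_hasDerivWithinAt
    (hf : ∀ t ∈ Icc a b, HasDerivWithinAt f (f' t) (Icc a b) t) (hf' : ContinuousOn f' (Icc a b)) :
    ∀ t ∈ Icc a b, f t = f a + ∫ s in a..t, f' s := by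
  intro t ht
  have hsub : Icc a t ⊆ Icc a b := Icc_subset_Icc_right ht.2
  rw [intervalIntegral.integral_eq_sub_of_hasDerivAt_of_le ht.1
    (fun s hs => (hf s (hsub hs)).continuousWithinAt.mono hsub)
    (fun s hs => (hf s (hsub (Ioo_subset_Icc_self hs))).hasDerivAt
      (Icc_mem_nhds hs.1 (hs.2.trans_le ht.2)))
    ((hf'.mono hsub).intervalIntegrable_of_Icc ht.1)]
  ring

theorem hasDerivWithinAt_of_eq_add_integral {x₀ : ℝ} (hf' : ContinuousOn f' (Icc a b))
    (hf : ∀ t ∈ Icc a b, f t = x₀ + ∫ s in a..t, f' s) :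
    ∀ t ∈ Icc a b, HasDerivWithinAt f (f' t) (Icc a b) t := by
  intro t ht
  have : Fact (t ∈ Icc a b) := ⟨ht⟩
  refine ((intervalIntegral.integral_hasDerivWithinAt_right ?_
    (hf'.stronglyMeasurableAtFilter_nhdsWithin measurableSet_Icc t) (hf' t ht)).const_add x₀
      ).congr_of_mem hf ht
  exact (hf'.mono (uIcc_subset_Icc (left_mem_Icc.2 (ht.1.trans ht.2)) ht)).intervalIntegrable

theorem contDiffOn_one_Icc_of_hasDerivWithinAt (hab : a < b)
    (hf : ∀ t ∈ Icc a b, HasDerivWithinAt f (f' t) (Icc a b) t) (hf' : ContinuousOn f' (Icc a b)) :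
    ContDiffOn ℝ 1 f (Icc a b) := by
  rw [contDiffOn_one_iff_derivWithin (uniqueDiffOn_Icc hab)]
  exact ⟨fun t ht => (hf t ht).differentiableWithinAt,
    hf'.congr fun t ht => (hf t ht).derivWithin (uniqueDiffOn_Icc hab t ht)⟩

end DerivOnIcc

section Shooting

variable {G : ℝ → ℝ → ℝ} {K : ℝ≥0} {w₁ w₂ M : ℝ}

theorem exists_hasDerivWithinAt_of_lipschitzWith (hw : w₁ ≤ w₂)
    (hG : ∀ t, LipschitzWith K (G t)) (hGt : ∀ x, Continuous (G · x)) (hGM : ∀ t x, |G t x| ≤ M)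
    (u₁ : ℝ) :
    ∃ U : ℝ → ℝ, U w₁ = u₁ ∧ ∀ t ∈ Icc w₁ w₂, HasDerivWithinAt U (G t (U t)) (Icc w₁ w₂) t := by
  have hM : 0 ≤ M := (abs_nonneg _).trans (hGM w₁ u₁)
  have hPL : IsPicardLindelof G (⟨w₁, left_mem_Icc.2 hw⟩ : Icc w₁ w₂) u₁
      (M * (w₂ - w₁)).toNNReal 0 M.toNNReal K :=
    { lipschitzOnWith := fun t _ => (hG t).lipschitzOnWith
      continuousOn := fun x _ => (hGt x).continuousOn
      norm_le := fun t _ x _ => by simpa [Real.coe_toNNReal _ hM] using hGM t x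
      mul_max_le := by
        simp [Real.coe_toNNReal _ hM, Real.coe_toNNReal _ (mul_nonneg hM (sub_nonneg.2 hw)), hw] }
  exact hPL.exists_eq_forall_mem_Icc_hasDerivWithinAt₀

theorem dist_le_gronwallBound_of_hasDerivWithinAt (hw : w₁ ≤ w₂)
    (hG : ∀ t, LipschitzWith K (G t)) (hGM : ∀ t x, |G t x| ≤ M) {γ γ' : ℝ} {U V : ℝ → ℝ}
    (hU : ∀ t ∈ Icc w₁ w₂, HasDerivWithinAt U (γ * G t (U t)) (Icc w₁ w₂) t)
    (hV : ∀ t ∈ Icc w₁ w₂, HasDerivWithinAt V (γ' * G t (V t)) (Icc w₁ w₂) t)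
    (h₁ : U w₁ = V w₁) :
    dist (U w₂) (V w₂) ≤ gronwallBound 0 (‖γ‖₊ * K) (|γ - γ'| * M) (w₂ - w₁) := by
  have hIci : ∀ {W : ℝ → ℝ} {c : ℝ},
      (∀ t ∈ Icc w₁ w₂, HasDerivWithinAt W (c * G t (W t)) (Icc w₁ w₂) t) →
      ∀ t ∈ Ico w₁ w₂, HasDerivWithinAt W (c * G t (W t)) (Ici t) t :=
    fun hW t ht =>
      (hW t (Ico_subset_Icc_self ht)).mono_of_mem_nhdsWithin (Icc_mem_nhdsGE_of_mem ht)
  have := dist_le_of_approx_trajectories_ODE (v := fun t x => γ * G t x) (εf := 0)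
    (εg := |γ - γ'| * M) (fun t => (lipschitzWith_smul γ).comp (hG t))
    (HasDerivWithinAt.continuousOn hU) (hIci hU) (fun t _ => by simp)
    (HasDerivWithinAt.continuousOn hV) (hIci hV) (fun t _ => ?_) (dist_le_zero.2 h₁) w₂
    (right_mem_Icc.2 hw)
  · simpa using this
  · rw [Real.dist_eq, ← sub_mul, abs_mul, abs_sub_comm]
    exact mul_le_mul_of_nonneg_left (hGM t _) (abs_nonneg _)

theorem continuous_apply_of_hasDerivWithinAt (hw : w₁ ≤ w₂)
    (hG : ∀ t, LipschitzWith K (G t)) (hGM : ∀ t x, |G t x| ≤ M) {u₁ : ℝ} {U : ℝ → ℝ → ℝ}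
    (hU₁ : ∀ γ, U γ w₁ = u₁)
    (hU : ∀ γ, ∀ t ∈ Icc w₁ w₂, HasDerivWithinAt (U γ) (γ * G t (U γ t)) (Icc w₁ w₂) t) :
    Continuous fun γ => U γ w₂ := by
  refine continuous_iff_continuousAt.2 fun γ => tendsto_iff_dist_tendsto_zero.2 ?_
  have hbound : Tendsto (fun γ' => gronwallBound 0 (‖γ‖₊ * K) (|γ - γ'| * M) (w₂ - w₁)) (𝓝 γ)
      (𝓝 0) := by
    have hc : Continuous fun γ' => |γ - γ'| * M := by fun_prop
    have := ((gronwallBound_continuous_ε 0 (‖γ‖₊ * K) (w₂ - w₁)).comp hc).tendsto γ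
    simpa [Function.comp_def, gronwallBound_ε0_δ0] using this
  refine squeeze_zero (fun _ => dist_nonneg) (fun γ' => ?_) hbound
  rw [dist_comm]
  exact dist_le_gronwallBound_of_hasDerivWithinAt hw hG hGM (hU γ) (hU γ')
    ((hU₁ γ).trans (hU₁ γ').symm)

theorem exists_two_point_of_lipschitzWith {u₁ u₂ m : ℝ} (hw : w₁ < w₂) (hu : u₁ ≤ u₂)
    (hG : ∀ t, LipschitzWith K (G t)) (hGt : ∀ x, Continuous (G · x)) (hm : 0 < m)
    (hGmM : ∀ t x, G t x ∈ Icc m M) :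
    ∃ γ ∈ Icc 0 ((u₂ - u₁) / (m * (w₂ - w₁))), ∃ U : ℝ → ℝ, U w₁ = u₁ ∧ U w₂ = u₂ ∧
      ∀ t ∈ Icc w₁ w₂, HasDerivWithinAt U (γ * G t (U t)) (Icc w₁ w₂) t := by
  set Γ := (u₂ - u₁) / (m * (w₂ - w₁))
  have hGM : ∀ t x, |G t x| ≤ M := fun t x =>
    abs_le.2 ⟨by linarith [(hGmM t x).1, (hGmM t x).2], (hGmM t x).2⟩
  have hsol := fun γ => exists_hasDerivWithinAt_of_lipschitzWith (G := fun t x => γ * G t x) hw.le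
    (fun t => (lipschitzWith_smul γ).comp (hG t)) (fun x => continuous_const.mul (hGt x))
    (fun t x => by rw [abs_mul]; exact mul_le_mul_of_nonneg_left (hGM t x) (abs_nonneg γ)) u₁
  choose U hU₁ hU using hsol
  have hU₀ : U 0 w₂ = u₁ := by
    have := (convex_Icc w₁ w₂).lipschitzOnWith_of_nnnorm_hasDerivWithin_le (C := 0) (hU 0)
      (fun t _ => by simp)
    simpa [hU₁] using this.dist_le_mul w₂ (right_mem_Icc.2 hw.le) w₁ (left_mem_Icc.2 hw.le)
  have hΓ : 0 ≤ Γ := div_nonneg (sub_nonneg.2 hu) (mul_pos hm (sub_pos.2 hw)).le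
  have hUΓ : u₂ ≤ U Γ w₂ := by
    have := mul_sub_le_image_sub_of_le_hasDerivWithinAt hw.le (hU Γ) (c := Γ * m)
      (fun t _ => mul_le_mul_of_nonneg_left (hGmM t _).1 hΓ)
    rw [mul_assoc, div_mul_cancel₀ _ (mul_pos hm (sub_pos.2 hw)).ne', hU₁] at this
    linarith
  obtain ⟨γ, hγ, hγU⟩ := intermediate_value_Icc hΓ
    (continuous_apply_of_hasDerivWithinAt hw.le hG hGM hU₁ hU).continuousOn ⟨hU₀ ▸ hu, hUΓ⟩
  exact ⟨γ, hγ, U γ, hU₁ γ, hγU, hU γ⟩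

end Shooting

theorem exists_lipschitzWith_approx_of_continuousOn {f : ℝ → ℝ → ℝ} {w₁ w₂ u₁ u₂ m M ε : ℝ}
    (hw : w₁ ≤ w₂) (hu : u₁ ≤ u₂) (hf : ContinuousOn (uncurry f) (Icc w₁ w₂ ×ˢ Icc u₁ u₂))
    (hfmM : ∀ t ∈ Icc w₁ w₂, ∀ x ∈ Icc u₁ u₂, f t x ∈ Icc m M) (hε : 0 < ε) :
    ∃ (K : ℝ≥0) (G : ℝ → ℝ → ℝ), (∀ t, LipschitzWith K (G t)) ∧ Continuous (uncurry G) ∧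
      (∀ t x, G t x ∈ Icc m M) ∧ ∀ t ∈ Icc w₁ w₂, ∀ x ∈ Icc u₁ u₂, |G t x - f t x| ≤ ε := by
  have hmM : m ≤ M := nonempty_Icc.1 ⟨_, hfmM w₁ (left_mem_Icc.2 hw) u₁ (left_mem_Icc.2 hu)⟩
  have hf₀ : Continuous fun p : Icc w₁ w₂ × Icc u₁ u₂ => f p.1 p.2 :=
    hf.comp_continuous (f := fun p : Icc w₁ w₂ × Icc u₁ u₂ => ((p.1 : ℝ), (p.2 : ℝ))) (by fun_prop)
      fun p => ⟨p.1.2, p.2.2⟩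
  obtain ⟨K, g, hg, hgf⟩ := exists_lipschitzWith_abs_sub_lt hf₀ hε
  -- projecting onto `[m, M]` does not spoil the approximation, as `f` takes its values there
  let G (t x : ℝ) : ℝ := projIcc m M hmM (g (projIcc w₁ w₂ hw t, projIcc u₁ u₂ hu x))
  refine ⟨K, G, fun t => ?_, ?_, fun t x => (projIcc m M hmM _).2, fun t ht x hx => ?_⟩
  · simpa [G, Function.comp_def] using
      (LipschitzWith.subtype_val _).comp ((LipschitzWith.projIcc hmM).comp
        (hg.comp ((LipschitzWith.const (projIcc w₁ w₂ hw t)).prodMk (LipschitzWith.projIcc hu))))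
  · exact continuous_subtype_val.comp (continuous_projIcc.comp (hg.continuous.comp (by fun_prop)))
  · have hp : (projIcc w₁ w₂ hw t, projIcc u₁ u₂ hu x) = (⟨t, ht⟩, ⟨x, hx⟩) := by
      rw [projIcc_of_mem hw ht, projIcc_of_mem hu hx]
    calc |G t x - f t x|
        = dist (projIcc m M hmM (g (⟨t, ht⟩, ⟨x, hx⟩))) (projIcc m M hmM (f t x)) := by
          rw [Subtype.dist_eq, projIcc_of_mem hmM (hfmM t ht x hx), Real.dist_eq, ← hp]
      _ ≤ dist (g (⟨t, ht⟩, ⟨x, hx⟩)) (f t x) := by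
          simpa using (LipschitzWith.projIcc hmM).dist_le_mul _ _
      _ ≤ ε := (hgf _).le

theorem exists_approx_two_point {f : ℝ → ℝ → ℝ} {w₁ w₂ u₁ u₂ m M ε : ℝ} (hw : w₁ < w₂)
    (hu : u₁ ≤ u₂) (hf : ContinuousOn (uncurry f) (Icc w₁ w₂ ×ˢ Icc u₁ u₂)) (hm : 0 < m)
    (hfmM : ∀ t ∈ Icc w₁ w₂, ∀ x ∈ Icc u₁ u₂, f t x ∈ Icc m M) (hε : 0 < ε) :
    ∃ γ ∈ Icc 0 ((u₂ - u₁) / (m * (w₂ - w₁))), ∃ U φ : ℝ → ℝ, U w₁ = u₁ ∧ U w₂ = u₂ ∧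
      MapsTo U (Icc w₁ w₂) (Icc u₁ u₂) ∧
      (∀ t ∈ Icc w₁ w₂, HasDerivWithinAt U (γ * φ t) (Icc w₁ w₂) t) ∧
      ContinuousOn φ (Icc w₁ w₂) ∧ (∀ t, φ t ∈ Icc m M) ∧
      ∀ t ∈ Icc w₁ w₂, |φ t - f t (U t)| ≤ ε := by
  obtain ⟨K, G, hG, hGc, hGmM, hGf⟩ :=
    exists_lipschitzWith_approx_of_continuousOn hw.le hu hf hfmM hε
  obtain ⟨γ, hγ, U, hU₁, hU₂, hU⟩ := exists_two_point_of_lipschitzWith hw hu hG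
    (fun x => hGc.comp (continuous_id.prodMk continuous_const)) hm hGmM
  have hUmem : MapsTo U (Icc w₁ w₂) (Icc u₁ u₂) := hU₁ ▸ hU₂ ▸
    mapsTo_Icc_of_hasDerivWithinAt_nonneg hU fun t _ => mul_nonneg hγ.1 (hm.le.trans (hGmM t _).1)
  refine ⟨γ, hγ, U, fun t => G t (U t), hU₁, hU₂, hUmem, hU, ?_, fun t => hGmM t _,
    fun t ht => hGf t ht _ (hUmem ht)⟩
  exact hGc.comp_continuousOn (continuousOn_id.prodMk (HasDerivWithinAt.continuousOn hU))

theorem exists_subseq_tendsto_of_lipschitzOnWith {a b c d : ℝ} (hab : a ≤ b) {s : Set ℝ}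
    (hs : IsCompact s) {γ : ℕ → ℝ} (hγ : ∀ n, γ n ∈ s) {U : ℕ → ℝ → ℝ} {L : ℝ≥0}
    (hU : ∀ n, LipschitzOnWith L (U n) (Icc a b)) (hUmem : ∀ n, MapsTo (U n) (Icc a b) (Icc c d)) :
    ∃ γ₀ ∈ s, ∃ V : ℝ → ℝ, Continuous V ∧ ∃ ψ : ℕ → ℕ, StrictMono ψ ∧
      Tendsto (γ ∘ ψ) atTop (𝓝 γ₀) ∧
        ∀ t ∈ Icc a b, Tendsto (fun k => U (ψ k) t) atTop (𝓝 (V t)) := by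
  let W (n : ℕ) : C(Icc a b, ℝ) := ⟨(Icc a b).domRestrict (U n), (hU n).continuousOn.domRestrict⟩
  obtain ⟨⟨γ₀, W₀⟩, ⟨hγ₀, -⟩, ψ, hψ, hlim⟩ :=
    (hs.prod (isCompact_setOf_lipschitzWith_forall_mem isCompact_Icc L)).tendsto_subseq
      (x := fun n => (γ n, W n)) fun n => ⟨hγ n, (hU n).to_restrict, fun t => hUmem n t.2⟩
  refine ⟨γ₀, hγ₀, IccExtend hab W₀, W₀.continuous.Icc_extend', ψ, hψ,
    (continuous_fst.tendsto _).comp hlim, fun t ht => ?_⟩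
  simpa [IccExtend_of_mem hab W₀ ht, W, Function.comp_def] using
    ((continuous_eval_const ⟨t, ht⟩).tendsto W₀).comp ((continuous_snd.tendsto _).comp hlim)

theorem ContinuousWithinAt.tendsto_of_abs_sub_le {X ι : Type*} [TopologicalSpace X] {F : X → ℝ}
    {s : Set X} {x : X} (hF : ContinuousWithinAt F s x) {l : Filter ι} {x' : ι → X}
    (hx : Tendsto x' l (𝓝[s] x)) {y ε : ι → ℝ} (hy : ∀ i, |y i - F (x' i)| ≤ ε i)
    (hε : Tendsto ε l (𝓝 0)) : Tendsto y l (𝓝 (F x)) := by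
  simpa using (squeeze_zero_norm hy hε).add (hF.tendsto.comp hx)

theorem eq_add_integral_of_tendsto {a b x₀ B : ℝ} {U g : ℕ → ℝ → ℝ} {V g₀ : ℝ → ℝ}
    (hU : ∀ n, ∀ t ∈ Icc a b, U n t = x₀ + ∫ s in a..t, g n s)
    (hg : ∀ n, ContinuousOn (g n) (Icc a b)) (hgB : ∀ n, ∀ s ∈ Icc a b, |g n s| ≤ B)
    (hg₀ : ∀ s ∈ Icc a b, Tendsto (g · s) atTop (𝓝 (g₀ s)))
    (hUV : ∀ t ∈ Icc a b, Tendsto (U · t) atTop (𝓝 (V t))) :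
    ∀ t ∈ Icc a b, V t = x₀ + ∫ s in a..t, g₀ s := by
  intro t ht
  have hsub : uIoc a t ⊆ Icc a b := by
    rw [uIoc_of_le ht.1]
    exact Ioc_subset_Icc_self.trans (Icc_subset_Icc_right ht.2)
  have hint : Tendsto (fun n => ∫ s in a..t, g n s) atTop (𝓝 (∫ s in a..t, g₀ s)) :=
    intervalIntegral.tendsto_integral_filter_of_dominated_convergence (fun _ => B)
      (Eventually.of_forall fun n => ((hg n).mono hsub).aestronglyMeasurable measurableSet_uIoc)
      (Eventually.of_forall fun n => ae_of_all _ fun s hs => hgB n s (hsub hs))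
      intervalIntegrable_const (ae_of_all _ fun s hs => hg₀ s (hsub hs))
  exact tendsto_nhds_unique (hUV t ht)
    ((hint.const_add x₀).congr fun n => (hU n t ht).symm)

theorem IsCompact.exists_forall_mem_Icc_of_pos {X : Type*} [TopologicalSpace X] {s : Set X}
    (hs : IsCompact s) {f : X → ℝ} (hf : ContinuousOn f s) (hpos : ∀ x ∈ s, 0 < f x) :
    ∃ m M, 0 < m ∧ ∀ x ∈ s, f x ∈ Icc m M := by
  rcases s.eq_empty_or_nonempty with rfl | hne
  · exact ⟨1, 1, one_pos, fun x hx => hx.elim⟩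
  obtain ⟨p, hp, hpmin⟩ := hs.exists_isMinOn hne hf
  obtain ⟨q, -, hqmax⟩ := hs.exists_isMaxOn hne hf
  exact ⟨f p, f q, hpos p hp, fun x hx => ⟨hpmin hx, hqmax hx⟩⟩

theorem exists_two_point_of_continuousOn {f : ℝ → ℝ → ℝ} {w₁ w₂ u₁ u₂ : ℝ} (hw : w₁ < w₂)
    (hu : u₁ ≤ u₂) (hf : ContinuousOn (uncurry f) (Icc w₁ w₂ ×ˢ Icc u₁ u₂))
    (hpos : ∀ t ∈ Icc w₁ w₂, ∀ x ∈ Icc u₁ u₂, 0 < f t x) :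
    ∃ (γ : ℝ) (U : ℝ → ℝ), ContDiffOn ℝ 1 U (Icc w₁ w₂) ∧ MapsTo U (Icc w₁ w₂) (Icc u₁ u₂) ∧
      U w₁ = u₁ ∧ U w₂ = u₂ ∧
      ∀ t ∈ Icc w₁ w₂, HasDerivWithinAt U (γ * f t (U t)) (Icc w₁ w₂) t := by
  obtain ⟨m, M, hm, hfmM⟩ := (isCompact_Icc.prod isCompact_Icc).exists_forall_mem_Icc_of_pos hf
    fun p hp => hpos p.1 hp.1 p.2 hp.2
  set Γ := (u₂ - u₁) / (m * (w₂ - w₁))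
  choose γ hγ U φ hU₁ hU₂ hUmem hU hφ hφmM hφf using fun n : ℕ =>
    exists_approx_two_point hw hu hf hm (fun t ht x hx => hfmM (t, x) ⟨ht, hx⟩)
      (Nat.one_div_pos_of_nat (n := n))
  have hbound : ∀ n t, |γ n * φ n t| ≤ Γ * M := fun n t => by
    rw [abs_mul, abs_of_nonneg (hγ n).1, abs_of_nonneg (hm.le.trans (hφmM n t).1)]
    exact mul_le_mul (hγ n).2 (hφmM n t).2 (hm.le.trans (hφmM n t).1) ((hγ n).1.trans (hγ n).2)
  have hlip : ∀ n, LipschitzOnWith (Γ * M).toNNReal (U n) (Icc w₁ w₂) := fun n =>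
    (convex_Icc _ _).lipschitzOnWith_of_nnnorm_hasDerivWithin_le (hU n) fun t _ => by
      rw [← NNReal.coe_le_coe, coe_nnnorm, Real.norm_eq_abs]
      exact (hbound n t).trans (Real.le_coe_toNNReal _)
  obtain ⟨γ₀, -, V, hV, ψ, hψ, hγψ, hUψ⟩ :=
    exists_subseq_tendsto_of_lipschitzOnWith hw.le isCompact_Icc hγ hlip hUmem
  have hVmem : MapsTo V (Icc w₁ w₂) (Icc u₁ u₂) := fun t ht =>
    isClosed_Icc.mem_of_tendsto (hUψ t ht) (Eventually.of_forall fun _ => hUmem _ ht)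
  have hφψ : ∀ s ∈ Icc w₁ w₂,
      Tendsto (fun k => γ (ψ k) * φ (ψ k) s) atTop (𝓝 (γ₀ * f s (V s))) := fun s hs =>
    hγψ.mul ((hf (s, V s) ⟨hs, hVmem hs⟩).tendsto_of_abs_sub_le
      (tendsto_nhdsWithin_iff.2 ⟨tendsto_const_nhds.prodMk_nhds (hUψ s hs),
        Eventually.of_forall fun _ => ⟨hs, hUmem _ hs⟩⟩)
      (fun k => hφf (ψ k) s hs) (tendsto_one_div_add_atTop_nhds_zero_nat.comp hψ.tendsto_atTop))
  have hcont : ContinuousOn (fun s => γ₀ * f s (V s)) (Icc w₁ w₂) :=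
    continuousOn_const.mul
      (hf.comp (continuousOn_id.prodMk hV.continuousOn) fun s hs => ⟨hs, hVmem hs⟩)
  have hVeq := eq_add_integral_of_tendsto
    (fun k => hU₁ (ψ k) ▸ eq_add_integral_of_hasDerivWithinAt (hU (ψ k))
      (continuousOn_const.mul (hφ (ψ k))))
    (fun k => continuousOn_const.mul (hφ (ψ k))) (fun k s _ => hbound (ψ k) s) hφψ hUψ
  have hV' := hasDerivWithinAt_of_eq_add_integral hcont hVeq
  refine ⟨γ₀, V, contDiffOn_one_Icc_of_hasDerivWithinAt hw hV' hcont, hVmem, ?_, ?_, hV'⟩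
  · simpa using hVeq w₁ (left_mem_Icc.2 hw.le)
  · exact tendsto_nhds_unique (hUψ w₂ (right_mem_Icc.2 hw.le)) (by simp [hU₂])

/-- Existence for the two-point problem `U' = γ b(U,·)/a(U,·)`, `U w₁ = u₁`, `U w₂ = u₂`,
when `a, b` are continuous and positive on the rectangle `R = [u₁,u₂] × [w₁,w₂]`. -/
theorem stmt4 (w₁ w₂ u₁ u₂ : ℝ) (hw : w₁ < w₂) (hu : u₁ ≤ u₂)
    (a b : ℝ → ℝ → ℝ)
    (ha : ContinuousOn (fun p : ℝ × ℝ => a p.1 p.2) (Icc u₁ u₂ ×ˢ Icc w₁ w₂))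
    (hb : ContinuousOn (fun p : ℝ × ℝ => b p.1 p.2) (Icc u₁ u₂ ×ˢ Icc w₁ w₂))
    (hapos : ∀ u ∈ Icc u₁ u₂, ∀ w ∈ Icc w₁ w₂, 0 < a u w)
    (hbpos : ∀ u ∈ Icc u₁ u₂, ∀ w ∈ Icc w₁ w₂, 0 < b u w) :
    ∃ (γ : ℝ) (U : ℝ → ℝ),
      ContDiffOn ℝ 1 U (Icc w₁ w₂) ∧
      (∀ w ∈ Icc w₁ w₂, U w ∈ Icc u₁ u₂) ∧
      U w₁ = u₁ ∧ U w₂ = u₂ ∧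
      ∀ w ∈ Icc w₁ w₂,
        HasDerivWithinAt U (γ * b (U w) w / a (U w) w) (Icc w₁ w₂) w := by
  have hswap : MapsTo Prod.swap (Icc w₁ w₂ ×ˢ Icc u₁ u₂) (Icc u₁ u₂ ×ˢ Icc w₁ w₂) :=
    fun p hp => ⟨hp.2, hp.1⟩
  have hf : ContinuousOn (uncurry fun w u => b u w / a u w) (Icc w₁ w₂ ×ˢ Icc u₁ u₂) :=
    (hb.comp continuous_swap.continuousOn hswap).div (ha.comp continuous_swap.continuousOn hswap)
      fun p hp => (hapos _ hp.2 _ hp.1).ne'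
  obtain ⟨γ, U, hU, hUmem, hU₁, hU₂, hU'⟩ := exists_two_point_of_continuousOn hw hu hf
    fun w hw' u hu' => div_pos (hbpos u hu' w hw') (hapos u hu' w hw')
  refine ⟨γ, U, hU, hUmem, hU₁, hU₂, fun w hw' => ?_⟩
  simpa only [mul_div_assoc] using hU' w hw'
end

section
/- Let w₁ < w₂ and u₁ ≤ u₂, R = [u₁, u₂] × [w₁, w₂]. Let a, b : R → ℝ be continuous with a(u, w) > 0 and b(u, w) > 0 on R, and suppose the quotient F(U, w) = b(U, w)/a(U, w) satisfies a Lipschitz condition in U on R, i.e. there is L ≥ 0 with |F(U, w) − F(V, w)| ≤ L|U − V| for all (U, w), (V, w) ∈ R. If (γ₁, U₁) and (γ₂, U₂) are pairs with γᵢ ∈ ℝ, Uᵢ : [w₁, w₂] → [u₁, u₂] continuously differentiable, Uᵢ(w₁) = u₁, Uᵢ(w₂) = u₂, and Uᵢ'(w) = γᵢ b(Uᵢ(w), w)/a(Uᵢ(w), w) for all w ∈ [w₁, w₂], then γ₁ = γ₂ and U₁ = U₂ on [w₁, w₂]. -/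
/-!
Write `F = b / a`, so that a solution is `U' = γ F(U, w)` with `F > 0`.

If `γ₁ < γ₂`, then wherever the graphs of `U₁` and `U₂` touch, `U₂` is the steeper one, so
`U₁ ≤ U₂` throughout. Then `U₂ - U₁ ≥ 0` vanishes at `w₂`, forcing its derivative there to be
`≤ 0`; but that derivative is `(γ₂ - γ₁) F(u₂, w₂) > 0`. Hence `γ₁ = γ₂`, and the solutions
coincide by uniqueness for Lipschitz initial value problems.
-/

open Set

lemma hasDerivWithinAt_Ici_of_Icc {f : ℝ → ℝ} {f' a b x : ℝ} (hx : x ∈ Ico a b)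
    (h : HasDerivWithinAt f f' (Icc a b) x) : HasDerivWithinAt f f' (Ici x) x :=
  h.mono_of_mem_nhdsWithin (Icc_mem_nhdsGE_of_mem hx)

lemma HasDerivWithinAt.nonpos_of_isMinOn_Icc_right {f : ℝ → ℝ} {f' a b : ℝ} (hab : a < b)
    (hmin : IsMinOn f (Icc a b) b) (hf : HasDerivWithinAt f f' (Icc a b) b) : f' ≤ 0 := by
  have hcone : a - b ∈ posTangentConeAt (Icc a b) b :=
    sub_mem_posTangentConeAt_of_segment_subset (segment_symm ℝ a b ▸ segment_subset_Icc hab.le)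
  have := hmin.localize.hasFDerivWithinAt_nonneg hf.hasFDerivWithinAt hcone
  simp only [ContinuousLinearMap.toSpanSingleton_apply, smul_eq_mul] at this
  nlinarith

section ScaledODE

variable {F : ℝ → ℝ → ℝ} {s : Set ℝ} {a b γ γ₁ γ₂ : ℝ} {U₁ U₂ : ℝ → ℝ}

theorem le_of_hasDerivWithinAt_of_coeff_lt (hF : ∀ w ∈ Icc a b, ∀ u ∈ s, 0 < F u w)
    (hγ : γ₁ < γ₂) (hU₁s : ∀ w ∈ Icc a b, U₁ w ∈ s)
    (hU₁ : ∀ w ∈ Icc a b, HasDerivWithinAt U₁ (γ₁ * F (U₁ w) w) (Icc a b) w)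
    (hU₂ : ∀ w ∈ Icc a b, HasDerivWithinAt U₂ (γ₂ * F (U₂ w) w) (Icc a b) w)
    (ha : U₁ a ≤ U₂ a) : ∀ w ∈ Icc a b, U₁ w ≤ U₂ w :=
  image_le_of_deriv_right_lt_deriv_boundary'
    (fun w hw => (hU₁ w hw).continuousWithinAt)
    (fun w hw => hasDerivWithinAt_Ici_of_Icc hw (hU₁ w (Ico_subset_Icc_self hw))) ha
    (fun w hw => (hU₂ w hw).continuousWithinAt)
    (fun w hw => hasDerivWithinAt_Ici_of_Icc hw (hU₂ w (Ico_subset_Icc_self hw)))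
    (fun w hw heq => by
      have hw' := Ico_subset_Icc_self hw
      rw [← heq]
      exact mul_lt_mul_of_pos_right hγ (hF w hw' _ (hU₁s w hw')))

theorem coeff_le_of_eq_left_of_eq_right (hab : a < b) (hF : ∀ w ∈ Icc a b, ∀ u ∈ s, 0 < F u w)
    (hU₁s : ∀ w ∈ Icc a b, U₁ w ∈ s)
    (hU₁ : ∀ w ∈ Icc a b, HasDerivWithinAt U₁ (γ₁ * F (U₁ w) w) (Icc a b) w)
    (hU₂ : ∀ w ∈ Icc a b, HasDerivWithinAt U₂ (γ₂ * F (U₂ w) w) (Icc a b) w)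
    (ha : U₁ a = U₂ a) (hb : U₁ b = U₂ b) : γ₂ ≤ γ₁ := by
  by_contra! hγ
  have hbmem : b ∈ Icc a b := right_mem_Icc.2 hab.le
  have hle := le_of_hasDerivWithinAt_of_coeff_lt hF hγ hU₁s hU₁ hU₂ ha.le
  have hmin : IsMinOn (U₂ - U₁) (Icc a b) b := fun w hw => by
    simpa [hb] using hle w hw
  have hderiv := ((hU₂ b hbmem).sub (hU₁ b hbmem)).nonpos_of_isMinOn_Icc_right hab hmin
  rw [← hb, ← sub_mul] at hderiv
  exact (mul_pos (sub_pos.2 hγ) (hF b hbmem _ (hU₁s b hbmem))).not_ge hderiv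

theorem eqOn_of_hasDerivWithinAt_of_lipschitz {L : ℝ}
    (hLip : ∀ w ∈ Icc a b, ∀ u ∈ s, ∀ v ∈ s, |F u w - F v w| ≤ L * |u - v|)
    (hU₁s : ∀ w ∈ Icc a b, U₁ w ∈ s) (hU₂s : ∀ w ∈ Icc a b, U₂ w ∈ s)
    (hU₁ : ∀ w ∈ Icc a b, HasDerivWithinAt U₁ (γ * F (U₁ w) w) (Icc a b) w)
    (hU₂ : ∀ w ∈ Icc a b, HasDerivWithinAt U₂ (γ * F (U₂ w) w) (Icc a b) w)
    (ha : U₁ a = U₂ a) : EqOn U₁ U₂ (Icc a b) := by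
  have hv : ∀ w ∈ Ico a b, LipschitzOnWith (‖γ‖₊ * L.toNNReal) (fun u => γ * F u w) s := by
    refine fun w hw => LipschitzOnWith.of_dist_le_mul fun u hu v hv => ?_
    simp only [Real.dist_eq, ← mul_sub, abs_mul, NNReal.coe_mul, coe_nnnorm, Real.norm_eq_abs,
      Real.coe_toNNReal', mul_assoc]
    gcongr
    exact (hLip w (Ico_subset_Icc_self hw) u hu v hv).trans
      (mul_le_mul_of_nonneg_right (le_max_left _ _) (abs_nonneg _))
  exact ODE_solution_unique_of_mem_Icc_right hv
    (fun w hw => (hU₁ w hw).continuousWithinAt)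
    (fun w hw => hasDerivWithinAt_Ici_of_Icc hw (hU₁ w (Ico_subset_Icc_self hw)))
    (fun w hw => hU₁s w (Ico_subset_Icc_self hw))
    (fun w hw => (hU₂ w hw).continuousWithinAt)
    (fun w hw => hasDerivWithinAt_Ici_of_Icc hw (hU₂ w (Ico_subset_Icc_self hw)))
    (fun w hw => hU₂s w (Ico_subset_Icc_self hw)) ha

end ScaledODE

theorem stmt5_general (w₁ w₂ u₁ u₂ : ℝ) (hw : w₁ < w₂)
    (a b : ℝ → ℝ → ℝ)
    (hapos : ∀ u ∈ Icc u₁ u₂, ∀ w ∈ Icc w₁ w₂, 0 < a u w)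
    (hbpos : ∀ u ∈ Icc u₁ u₂, ∀ w ∈ Icc w₁ w₂, 0 < b u w)
    (L : ℝ)
    (hLip : ∀ w ∈ Icc w₁ w₂, ∀ U ∈ Icc u₁ u₂, ∀ V ∈ Icc u₁ u₂,
      |b U w / a U w - b V w / a V w| ≤ L * |U - V|)
    (γ₁ γ₂ : ℝ) (U₁ U₂ : ℝ → ℝ)
    (hU₁mem : ∀ w ∈ Icc w₁ w₂, U₁ w ∈ Icc u₁ u₂)
    (hU₂mem : ∀ w ∈ Icc w₁ w₂, U₂ w ∈ Icc u₁ u₂)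
    (hU₁a : U₁ w₁ = u₁) (hU₁b : U₁ w₂ = u₂)
    (hU₂a : U₂ w₁ = u₁) (hU₂b : U₂ w₂ = u₂)
    (hU₁ode : ∀ w ∈ Icc w₁ w₂,
      HasDerivWithinAt U₁ (γ₁ * b (U₁ w) w / a (U₁ w) w) (Icc w₁ w₂) w)
    (hU₂ode : ∀ w ∈ Icc w₁ w₂,
      HasDerivWithinAt U₂ (γ₂ * b (U₂ w) w / a (U₂ w) w) (Icc w₁ w₂) w) :
    γ₁ = γ₂ ∧ ∀ w ∈ Icc w₁ w₂, U₁ w = U₂ w := by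
  set F : ℝ → ℝ → ℝ := fun u w => b u w / a u w
  have hF : ∀ w ∈ Icc w₁ w₂, ∀ u ∈ Icc u₁ u₂, 0 < F u w := fun w hw u hu =>
    div_pos (hbpos u hu w hw) (hapos u hu w hw)
  have hU₁ : ∀ w ∈ Icc w₁ w₂, HasDerivWithinAt U₁ (γ₁ * F (U₁ w) w) (Icc w₁ w₂) w :=
    fun w hw => by simpa only [mul_div_assoc] using hU₁ode w hw
  have hU₂ : ∀ w ∈ Icc w₁ w₂, HasDerivWithinAt U₂ (γ₂ * F (U₂ w) w) (Icc w₁ w₂) w :=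
    fun w hw => by simpa only [mul_div_assoc] using hU₂ode w hw
  have ha : U₁ w₁ = U₂ w₁ := hU₁a.trans hU₂a.symm
  have hb : U₁ w₂ = U₂ w₂ := hU₁b.trans hU₂b.symm
  obtain rfl : γ₁ = γ₂ := le_antisymm
    (coeff_le_of_eq_left_of_eq_right hw hF hU₂mem hU₂ hU₁ ha.symm hb.symm)
    (coeff_le_of_eq_left_of_eq_right hw hF hU₁mem hU₁ hU₂ ha hb)
  exact ⟨rfl, eqOn_of_hasDerivWithinAt_of_lipschitz hLip hU₁mem hU₂mem hU₁ hU₂ ha⟩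

/-- Uniqueness for the two-point problem `U' = γ b(U,·)/a(U,·)`, `U w₁ = u₁`, `U w₂ = u₂`,
when `a, b` are continuous and positive on `R = [u₁,u₂] × [w₁,w₂]` and the quotient
`b/a` is Lipschitz in `U` uniformly in `w`. -/
theorem stmt5 (w₁ w₂ u₁ u₂ : ℝ) (hw : w₁ < w₂) (hu : u₁ ≤ u₂)
    (a b : ℝ → ℝ → ℝ)
    (ha : ContinuousOn (fun p : ℝ × ℝ => a p.1 p.2) (Icc u₁ u₂ ×ˢ Icc w₁ w₂))
    (hb : ContinuousOn (fun p : ℝ × ℝ => b p.1 p.2) (Icc u₁ u₂ ×ˢ Icc w₁ w₂))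
    (hapos : ∀ u ∈ Icc u₁ u₂, ∀ w ∈ Icc w₁ w₂, 0 < a u w)
    (hbpos : ∀ u ∈ Icc u₁ u₂, ∀ w ∈ Icc w₁ w₂, 0 < b u w)
    (L : ℝ) (hL : 0 ≤ L)
    (hLip : ∀ w ∈ Icc w₁ w₂, ∀ U ∈ Icc u₁ u₂, ∀ V ∈ Icc u₁ u₂,
      |b U w / a U w - b V w / a V w| ≤ L * |U - V|)
    (γ₁ γ₂ : ℝ) (U₁ U₂ : ℝ → ℝ)
    (hU₁C1 : ContDiffOn ℝ 1 U₁ (Icc w₁ w₂))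
    (hU₂C1 : ContDiffOn ℝ 1 U₂ (Icc w₁ w₂))
    (hU₁mem : ∀ w ∈ Icc w₁ w₂, U₁ w ∈ Icc u₁ u₂)
    (hU₂mem : ∀ w ∈ Icc w₁ w₂, U₂ w ∈ Icc u₁ u₂)
    (hU₁a : U₁ w₁ = u₁) (hU₁b : U₁ w₂ = u₂)
    (hU₂a : U₂ w₁ = u₁) (hU₂b : U₂ w₂ = u₂)
    (hU₁ode : ∀ w ∈ Icc w₁ w₂,
      HasDerivWithinAt U₁ (γ₁ * b (U₁ w) w / a (U₁ w) w) (Icc w₁ w₂) w)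
    (hU₂ode : ∀ w ∈ Icc w₁ w₂,
      HasDerivWithinAt U₂ (γ₂ * b (U₂ w) w / a (U₂ w) w) (Icc w₁ w₂) w) :
    γ₁ = γ₂ ∧ ∀ w ∈ Icc w₁ w₂, U₁ w = U₂ w :=
  stmt5_general w₁ w₂ u₁ u₂ hw a b hapos hbpos L hLip γ₁ γ₂ U₁ U₂ hU₁mem hU₂mem hU₁a hU₁b hU₂a hU₂b
    hU₁ode hU₂ode
end
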